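/- Let H be a Hilbert space, G ⊆ H a linear subspace satisfying uniqueness of representations in ℝe + G (with e ∈ H, the sum direct), and suppose the best approximation g(e) of e in G exists with ‖e − g(e)‖ > 0. Then for any h ∈ H: a best approximation g(h) of h in G exists iff a best approximation (c(h), g^ex(h)) of h in ℝe + G exists, and in that case c(h) = ⟨h, e − g(e)⟩ / ‖e − g(e)‖² and g^ex(h) = g(h) − c(h) g(e). -/

import Mathlib

/-- g is a best approximation of h in the subspace G. -/
def IsBestApprox {E : Type*} [NormedAddCommGroup E] [InnerProductSpace ℝ E]
    (G : Submodule ℝ E) (h g : E) : Prop :=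
  g ∈ G ∧ ∀ g' ∈ G, ‖g - h‖ ≤ ‖g' - h‖

/-- (c, g) is a best approximation of h in ℝ·e + G. -/
def IsBestApproxExt {E : Type*} [NormedAddCommGroup E] [InnerProductSpace ℝ E]
    (G : Submodule ℝ E) (e h : E) (c : ℝ) (g : E) : Prop :=
  g ∈ G ∧ ∀ (c' : ℝ), ∀ g' ∈ G, ‖c • e + g - h‖ ≤ ‖c' • e + g' - h‖

/-! Best approximations in a subspace are characterised by orthogonality of the residual. The
residual `r = e - g(e)` is orthogonal to `G`, and
`h - (c • e + gᵉˣ) = (h - (gᵉˣ + c • g(e))) - c • r`, so `(c, gᵉˣ)` is optimal in `ℝ e + G` exactly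
when `gᵉˣ + c • g(e)` is optimal in `G` and `c` is the coefficient `⟪h, r⟫ / ‖r‖²` of the
projection onto `r`. Uniqueness of best approximations in `G` then determines `gᵉˣ`. -/

open scoped RealInnerProductSpace

theorem Submodule.smul_add_mem_span_singleton_sup {R M : Type*} [Semiring R] [AddCommMonoid M]
    [Module R M] {p : Submodule R M} (x : M) (c : R) {y : M} (hy : y ∈ p) :
    c • x + y ∈ (R ∙ x) ⊔ p :=
  add_mem_sup (smul_mem _ c (mem_span_singleton_self x)) hy

section

variable {E : Type*} [NormedAddCommGroup E] [InnerProductSpace ℝ E] {G : Submodule ℝ E}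
  {e ge h g : E} {c : ℝ}

theorem inner_eq_zero_of_forall_norm_le_norm_add_smul {v w : E}
    (hmin : ∀ t : ℝ, ‖v‖ ≤ ‖v + t • w‖) : ⟪v, w⟫ = 0 := by
  have hquad : ∀ t : ℝ, 0 ≤ t * (2 * ⟪v, w⟫ + t * ‖w‖ ^ 2) := fun t => by
    have := pow_le_pow_left₀ (norm_nonneg v) (hmin t) 2
    rw [norm_add_sq_real, real_inner_smul_right, norm_smul, Real.norm_eq_abs, mul_pow,
      sq_abs] at this
    linarith
  -- at `t = -⟪v, w⟫ / (‖w‖² + 1)` the quadratic equals `-⟪v, w⟫² (‖w‖² + 2) / (‖w‖² + 1)²`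
  set t := -⟪v, w⟫ / (‖w‖ ^ 2 + 1)
  have hW : ‖w‖ ^ 2 + 1 ≠ 0 := by positivity
  have hval :
      t * (2 * ⟪v, w⟫ + t * ‖w‖ ^ 2) * (‖w‖ ^ 2 + 1) ^ 2 = -⟪v, w⟫ ^ 2 * (‖w‖ ^ 2 + 2) := by
    simp only [t]; field_simp; ring
  have hsq : ⟪v, w⟫ ^ 2 = 0 := by
    nlinarith [mul_nonneg (hquad t) (sq_nonneg (‖w‖ ^ 2 + 1)), sq_nonneg ⟪v, w⟫, sq_nonneg ‖w‖]
  exact pow_eq_zero_iff two_ne_zero |>.mp hsq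

theorem norm_sub_le_norm_sub_of_inner_eq_zero {x : E} (horth : ⟪h - g, x - g⟫ = 0) :
    ‖h - g‖ ≤ ‖h - x‖ := by
  have hsq := norm_sub_sq_eq_norm_sq_add_norm_sq_real horth
  rw [sub_sub_sub_cancel_right] at hsq
  nlinarith [norm_nonneg (h - g), norm_nonneg (h - x), norm_nonneg (x - g)]

theorem isBestApprox_iff_mem_orthogonal : IsBestApprox G h g ↔ g ∈ G ∧ h - g ∈ Gᗮ := by
  refine ⟨fun ⟨hg, hmin⟩ => ⟨hg, (G.mem_orthogonal' _).mpr fun w hw => ?_⟩,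
    fun ⟨hg, horth⟩ => ⟨hg, fun x hx => ?_⟩⟩
  · have hneg : ⟪g - h, w⟫ = 0 := inner_eq_zero_of_forall_norm_le_norm_add_smul fun t => by
      simpa only [sub_add_eq_add_sub] using hmin (g + t • w) (G.add_mem hg (G.smul_mem t hw))
    rwa [← neg_sub, inner_neg_left, neg_eq_zero]
  · rw [← norm_neg (g - h), ← norm_neg (x - h), neg_sub, neg_sub]
    exact norm_sub_le_norm_sub_of_inner_eq_zero
      (Submodule.inner_left_of_mem_orthogonal (G.sub_mem hx hg) horth)

theorem IsBestApprox.unique {g₁ g₂ : E} (h₁ : IsBestApprox G h g₁) (h₂ : IsBestApprox G h g₂) :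
    g₁ = g₂ := by
  obtain ⟨hg₁, horth₁⟩ := isBestApprox_iff_mem_orthogonal.mp h₁
  obtain ⟨hg₂, horth₂⟩ := isBestApprox_iff_mem_orthogonal.mp h₂
  have hdiff : (h - g₂) - (h - g₁) ∈ Gᗮ := Gᗮ.sub_mem horth₂ horth₁
  rw [sub_sub_sub_cancel_left] at hdiff
  exact sub_eq_zero.mp
    (Submodule.disjoint_def.mp G.orthogonal_disjoint _ (G.sub_mem hg₁ hg₂) hdiff)

theorem isBestApproxExt_iff_isBestApprox_sup :
    IsBestApproxExt G e h c g ↔ g ∈ G ∧ IsBestApprox ((ℝ ∙ e) ⊔ G) h (c • e + g) := by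
  refine ⟨fun ⟨hg, hmin⟩ =>
      ⟨hg, Submodule.smul_add_mem_span_singleton_sup e c hg, fun x hx => ?_⟩,
    fun ⟨hg, _, hmin⟩ => ⟨hg, fun c' g' hg' =>
      hmin _ (Submodule.smul_add_mem_span_singleton_sup e c' hg')⟩⟩
  obtain ⟨_, ⟨c', rfl⟩, g', hg', rfl⟩ :=
    Submodule.mem_sup.mp hx |>.imp fun _ => And.imp_left Submodule.mem_span_singleton.mp
  exact hmin c' g' hg'

theorem isBestApproxExt_iff_mem_orthogonal :
    IsBestApproxExt G e h c g ↔ g ∈ G ∧ ⟪e, h - (c • e + g)⟫ = 0 ∧ h - (c • e + g) ∈ Gᗮ := by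
  rw [isBestApproxExt_iff_isBestApprox_sup, isBestApprox_iff_mem_orthogonal,
    ← Submodule.inf_orthogonal, Submodule.mem_inf,
    Submodule.mem_orthogonal_singleton_iff_inner_right]
  exact ⟨fun ⟨hg, _, horth⟩ => ⟨hg, horth⟩,
    fun ⟨hg, horth⟩ => ⟨hg, Submodule.smul_add_mem_span_singleton_sup e c hg, horth⟩⟩

theorem IsBestApprox.inner_eq_inner_sub_of_mem_orthogonal (hge : IsBestApprox G e ge) {v : E}
    (hv : v ∈ Gᗮ) : ⟪e, v⟫ = ⟪e - ge, v⟫ := by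
  rw [inner_sub_left, Submodule.inner_right_of_mem_orthogonal hge.1 hv, sub_zero]

theorem IsBestApprox.inner_sub_sub_smul_add (hge : IsBestApprox G e ge) (c : ℝ) (hg : g ∈ G) :
    ⟪e - ge, h - (c • e + g)⟫ = ⟪h, e - ge⟫ - c * ‖e - ge‖ ^ 2 := by
  have hr := (isBestApprox_iff_mem_orthogonal.mp hge).2
  have hsplit : h - (c • e + g) = h - c • (e - ge) - (g + c • ge) := by module
  rw [hsplit, inner_sub_right, inner_sub_right, inner_smul_right, real_inner_self_eq_norm_sq,
    Submodule.inner_left_of_mem_orthogonal (G.add_mem hg (G.smul_mem c hge.1)) hr,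
    real_inner_comm, sub_zero]

theorem IsBestApprox.isBestApproxExt (hge : IsBestApprox G e ge) (hpos : ‖e - ge‖ ≠ 0)
    (hg : IsBestApprox G h g) :
    IsBestApproxExt G e h (⟪h, e - ge⟫ / ‖e - ge‖ ^ 2)
      (g - (⟪h, e - ge⟫ / ‖e - ge‖ ^ 2) • ge) := by
  set c := ⟪h, e - ge⟫ / ‖e - ge‖ ^ 2
  obtain ⟨hgG, horth⟩ := isBestApprox_iff_mem_orthogonal.mp hg
  have hr := (isBestApprox_iff_mem_orthogonal.mp hge).2
  have hmem : g - c • ge ∈ G := G.sub_mem hgG (G.smul_mem c hge.1)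
  have hres : h - (c • e + (g - c • ge)) = h - g - c • (e - ge) := by module
  have hresG : h - (c • e + (g - c • ge)) ∈ Gᗮ := hres ▸ Gᗮ.sub_mem horth (Gᗮ.smul_mem c hr)
  refine isBestApproxExt_iff_mem_orthogonal.mpr ⟨hmem, ?_, hresG⟩
  rw [hge.inner_eq_inner_sub_of_mem_orthogonal hresG, hge.inner_sub_sub_smul_add c hmem,
    div_mul_cancel₀ _ (pow_ne_zero 2 hpos), sub_self]

theorem IsBestApproxExt.isBestApprox_add_smul (hge : IsBestApprox G e ge)
    (hext : IsBestApproxExt G e h c g) : IsBestApprox G h (g + c • ge) := by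
  obtain ⟨hg, -, horth⟩ := isBestApproxExt_iff_mem_orthogonal.mp hext
  have hr := (isBestApprox_iff_mem_orthogonal.mp hge).2
  have hres : h - (g + c • ge) = h - (c • e + g) + c • (e - ge) := by module
  exact isBestApprox_iff_mem_orthogonal.mpr
    ⟨G.add_mem hg (G.smul_mem c hge.1), hres ▸ Gᗮ.add_mem horth (Gᗮ.smul_mem c hr)⟩

theorem IsBestApproxExt.coeff_eq (hge : IsBestApprox G e ge) (hpos : ‖e - ge‖ ≠ 0)
    (hext : IsBestApproxExt G e h c g) : c = ⟪h, e - ge⟫ / ‖e - ge‖ ^ 2 := by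
  obtain ⟨hg, he, horth⟩ := isBestApproxExt_iff_mem_orthogonal.mp hext
  rw [hge.inner_eq_inner_sub_of_mem_orthogonal horth, hge.inner_sub_sub_smul_add c hg,
    sub_eq_zero] at he
  exact eq_div_of_mul_eq (pow_ne_zero 2 hpos) he.symm

end

theorem MVH_exMVH_link_general {E : Type*} [NormedAddCommGroup E] [InnerProductSpace ℝ E]
    (G : Submodule ℝ E) (e : E)
    (ge : E) (hge : IsBestApprox G e ge) (hpos : 0 < ‖e - ge‖) (h : E) :
    ((∃ g, IsBestApprox G h g) ↔ ∃ c g, IsBestApproxExt G e h c g) ∧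
    (∀ (g : E) (c : ℝ) (gex : E), IsBestApprox G h g → IsBestApproxExt G e h c gex →
      c = (inner ℝ h (e - ge) : ℝ) / ‖e - ge‖ ^ 2 ∧ gex = g - c • ge) :=
  ⟨⟨fun ⟨_, hg⟩ => ⟨_, _, hge.isBestApproxExt hpos.ne' hg⟩,
    fun ⟨_, _, hext⟩ => ⟨_, hext.isBestApprox_add_smul hge⟩⟩,
  fun _ _ _ hg hext => ⟨hext.coeff_eq hge hpos.ne',
    eq_sub_of_add_eq ((hext.isBestApprox_add_smul hge).unique hg)⟩⟩

/-- Link between the MVH and extended MVH problems: under uniqueness of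
decompositions in ℝe + G and nondegeneracy ‖e − g(e)‖ > 0, a best approximation
of h in G exists iff one in ℝe + G exists, and then
c(h) = ⟨h, e − g(e)⟩ / ‖e − g(e)‖² and gᵉˣ(h) = g(h) − c(h)·g(e). -/
theorem MVH_exMVH_link {E : Type*} [NormedAddCommGroup E] [InnerProductSpace ℝ E]
    (G : Submodule ℝ E) (e : E)
    (huniqdec : ∀ (c1 c2 : ℝ) (g1 g2 : E), g1 ∈ G → g2 ∈ G →
      c1 • e + g1 = c2 • e + g2 → c1 = c2 ∧ g1 = g2)
    (ge : E) (hge : IsBestApprox G e ge) (hpos : 0 < ‖e - ge‖) (h : E) :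
    ((∃ g, IsBestApprox G h g) ↔ ∃ c g, IsBestApproxExt G e h c g) ∧
    (∀ (g : E) (c : ℝ) (gex : E), IsBestApprox G h g → IsBestApproxExt G e h c gex →
      c = (inner ℝ h (e - ge) : ℝ) / ‖e - ge‖ ^ 2 ∧ gex = g - c • ge) :=
  MVH_exMVH_link_general G e ge hge hpos h
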